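/- Variational upper bound on conditional mutual information: let X, X', Z be finite-valued random variables such that I(X'; Z | X) = 0, and for each value x' of X' with P(X'=x') > 0 let r(·|x') be a probability mass function on the range of Z satisfying r(z|x') > 0 whenever P(Z=z, X'=x') > 0. Then I(X; Z | X') = E_{(x,x')∼(X,X')}[ D_KL( P(Z ∈ · | X=x) ‖ r(·|x') ) ] - E_{x'∼X'}[ D_KL( P(Z ∈ · | X'=x') ‖ r(·|x') ) ]; in particular I(X; Z | X') ≤ E_{(x,x')∼(X,X')}[ D_KL( P(Z ∈ · | X=x) ‖ r(·|x') ) ]. -/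

import Mathlib

/-
Discrete probability setup: a finite sample space `Ω` with weight function `p`
(nonnegative, summing to 1).  Random variables are functions out of `Ω` into
nonempty finite sets.  `pr p X x = P(X = x)`, `ent` is Shannon entropy
(natural log, with `0 · log 0 = 0` since `Real.log 0 = 0`), `mi` is mutual
information `I(X;Y) = H(X) + H(Y) - H(X,Y)`, and `cmi` is conditional mutual
information `I(X;Y|W) = ∑ w, P(W=w) · I(X;Y | W=w)` computed with respect to
the conditional distribution `condp p W w` (terms with `P(W=w)=0` vanish).
`klDivF` is the discrete Kullback–Leibler divergence with the convention that
terms with `p s = 0` contribute `0` (indeed `0 * log 0 = 0` in Lean).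
-/

open scoped Classical
open Finset

noncomputable def pr {Ω α : Type*} [Fintype Ω] (p : Ω → ℝ) (X : Ω → α) (x : α) : ℝ :=
  ∑ ω, if X ω = x then p ω else 0

noncomputable def ent {Ω α : Type*} [Fintype Ω] [Fintype α] (p : Ω → ℝ) (X : Ω → α) : ℝ :=
  -∑ x, pr p X x * Real.log (pr p X x)

noncomputable def mi {Ω α β : Type*} [Fintype Ω] [Fintype α] [Fintype β]
    (p : Ω → ℝ) (X : Ω → α) (Y : Ω → β) : ℝ :=
  ent p X + ent p Y - ent p (fun ω => (X ω, Y ω))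

noncomputable def condp {Ω γ : Type*} [Fintype Ω] (p : Ω → ℝ) (W : Ω → γ) (w : γ) : Ω → ℝ :=
  fun ω => if W ω = w then p ω / pr p W w else 0

noncomputable def cmi {Ω α β γ : Type*} [Fintype Ω] [Fintype α] [Fintype β] [Fintype γ]
    (p : Ω → ℝ) (X : Ω → α) (Y : Ω → β) (W : Ω → γ) : ℝ :=
  ∑ w, pr p W w * mi (condp p W w) X Y

noncomputable def klDivF {S : Type*} [Fintype S] (p q : S → ℝ) : ℝ :=
  ∑ s, p s * Real.log (p s / q s)

/-!
Every quantity is an expectation over the sample space: `cmi p X Z X'` is the mean of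
`log (P(Z | X, X') / P(Z | X'))`, and inserting `r` splits this logarithm as
`log (P(Z | X, X') / r) - log (P(Z | X') / r)`. The hypothesis `I(X'; Z | X) = 0` is the
equality case of Gibbs' inequality for each `P(· | X = x)`, so `P(Z | X, X') = P(Z | X)` on the
support and the first mean is the first expected divergence. The second divergence is
nonnegative by Gibbs' inequality, since `r(· | x')` is a probability vector dominating
`P(Z | X' = x')`. Gibbs' inequality, with its equality case, comes from
`klDivF f g - ∑ f + ∑ g = ∑ g · klFun (f / g)` and `klFun ≥ 0` with equality only at `1`.
-/

open Real InformationTheory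

section klDivF

variable {S : Type*} [Fintype S] {f g : S → ℝ}

lemma klDivF_sub_sum_add_sum (hfg : ∀ s, g s = 0 → f s = 0) :
    klDivF f g - ∑ s, f s + ∑ s, g s = ∑ s, g s * klFun (f s / g s) := by
  rw [klDivF, ← sum_sub_distrib, ← sum_add_distrib]
  refine sum_congr rfl fun s _ => ?_
  by_cases hg : g s = 0
  · simp [hg, hfg s hg]
  · rw [klFun_apply]
    field_simp
    ring

lemma klDivF_nonneg (hf : ∀ s, 0 ≤ f s) (hg : ∀ s, 0 ≤ g s) (hsum : ∑ s, g s ≤ ∑ s, f s)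
    (hfg : ∀ s, g s = 0 → f s = 0) : 0 ≤ klDivF f g := by
  have hterms : 0 ≤ ∑ s, g s * klFun (f s / g s) :=
    sum_nonneg fun s _ => mul_nonneg (hg s) (klFun_nonneg (div_nonneg (hf s) (hg s)))
  linarith [klDivF_sub_sum_add_sum hfg]

lemma eq_of_klDivF_nonpos (hf : ∀ s, 0 ≤ f s) (hg : ∀ s, 0 ≤ g s)
    (hsum : ∑ s, g s ≤ ∑ s, f s) (hfg : ∀ s, g s = 0 → f s = 0) (h : klDivF f g ≤ 0) :
    f = g := by
  have hterm : ∀ s ∈ univ, 0 ≤ g s * klFun (f s / g s) :=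
    fun s _ => mul_nonneg (hg s) (klFun_nonneg (div_nonneg (hf s) (hg s)))
  have hzero : ∑ s, g s * klFun (f s / g s) = 0 :=
    le_antisymm (by linarith [klDivF_sub_sum_add_sum hfg]) (sum_nonneg hterm)
  funext s
  rcases mul_eq_zero.mp ((sum_eq_zero_iff_of_nonneg hterm).mp hzero s (mem_univ s)) with h0 | h1
  · rw [h0, hfg s h0]
  · rw [klFun_eq_zero_iff (div_nonneg (hf s) (hg s))] at h1
    exact (div_eq_one_iff_eq (fun h0 => by simp [h0] at h1)).mp h1

end klDivF

section pr

variable {Ω α β γ : Type*} [Fintype Ω] {p : Ω → ℝ}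

lemma pr_nonneg (hp : ∀ ω, 0 ≤ p ω) (X : Ω → α) (x : α) : 0 ≤ pr p X x :=
  sum_nonneg fun ω _ => by split_ifs <;> simp [hp ω]

lemma le_pr_apply (hp : ∀ ω, 0 ≤ p ω) (X : Ω → α) (ω : Ω) : p ω ≤ pr p X (X ω) := by
  have := single_le_sum (f := fun ω' => if X ω' = X ω then p ω' else 0)
    (fun ω' _ => by split_ifs <;> simp [hp ω']) (mem_univ ω)
  simpa [pr] using this

lemma pr_apply_pos (hp : ∀ ω, 0 ≤ p ω) (X : Ω → α) {ω : Ω} (hω : p ω ≠ 0) :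
    0 < pr p X (X ω) :=
  ((hp ω).lt_of_ne' hω).trans_le (le_pr_apply hp X ω)

lemma pr_mono (hp : ∀ ω, 0 ≤ p ω) {X : Ω → α} {Y : Ω → β} {x : α} {y : β}
    (h : ∀ ω, X ω = x → Y ω = y) : pr p X x ≤ pr p Y y :=
  sum_le_sum fun ω _ => by
    by_cases hx : X ω = x
    · simp [hx, h ω hx]
    · split_ifs <;> simp [hp ω]

lemma pr_pair_eq_zero_of_mul_pr_eq_zero (hp : ∀ ω, 0 ≤ p ω) {X : Ω → α} {Y : Ω → β}
    {s : α × β} (h : pr p X s.1 * pr p Y s.2 = 0) : pr p (fun ω => (X ω, Y ω)) s = 0 := by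
  refine le_antisymm ?_ (pr_nonneg hp _ s)
  rcases mul_eq_zero.mp h with h | h
  · exact h ▸ pr_mono hp fun ω hω => (Prod.ext_iff.mp hω).1
  · exact h ▸ pr_mono hp fun ω hω => (Prod.ext_iff.mp hω).2

lemma pr_congr {X : Ω → α} {Y : Ω → β} {x : α} {y : β} (h : ∀ ω, X ω = x ↔ Y ω = y) :
    pr p X x = pr p Y y :=
  sum_congr rfl fun ω _ => by simp only [h ω]

lemma sum_pr_mul [Fintype α] (X : Ω → α) (g : α → ℝ) :
    ∑ x, pr p X x * g x = ∑ ω, p ω * g (X ω) := by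
  simp only [pr, sum_mul, ite_mul, zero_mul]
  rw [sum_comm]
  simp

lemma sum_pr [Fintype α] (X : Ω → α) : ∑ x, pr p X x = ∑ ω, p ω := by
  simpa using sum_pr_mul (p := p) X 1

lemma sum_pr_mul_congr [Fintype α] {X : Ω → α} {g g' : α → ℝ}
    (h : ∀ ω, p ω ≠ 0 → g (X ω) = g' (X ω)) :
    ∑ x, pr p X x * g x = ∑ x, pr p X x * g' x := by
  rw [sum_pr_mul, sum_pr_mul]
  refine sum_congr rfl fun ω _ => ?_
  by_cases hω : p ω = 0
  · simp [hω]
  · rw [h ω hω]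

end pr

section condp

variable {Ω α β γ : Type*} [Fintype Ω] {p : Ω → ℝ}

lemma condp_nonneg (hp : ∀ ω, 0 ≤ p ω) (W : Ω → γ) (w : γ) (ω : Ω) : 0 ≤ condp p W w ω := by
  unfold condp
  split_ifs
  exacts [div_nonneg (hp ω) (pr_nonneg hp W w), le_rfl]

lemma sum_condp {W : Ω → γ} {w : γ} (hw : pr p W w ≠ 0) : ∑ ω, condp p W w ω = 1 := by
  simp only [condp, ← div_self hw, pr, sum_div, ite_div, zero_div]

lemma pr_condp (W : Ω → γ) (w : γ) (Y : Ω → β) (y : β) :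
    pr (condp p W w) Y y = pr p (fun ω => (Y ω, W ω)) (y, w) / pr p W w := by
  simp only [pr, condp, sum_div, Prod.mk.injEq]
  refine sum_congr rfl fun ω _ => ?_
  split_ifs <;> simp_all

lemma condp_congr {W : Ω → γ} {V : Ω → β} {w : γ} {v : β} (h : ∀ ω, W ω = w ↔ V ω = v) :
    condp p W w = condp p V v := by
  funext ω
  simp only [condp, h ω, pr_congr h]

lemma condp_condp {W : Ω → γ} {w : γ} (hw : pr p W w ≠ 0) (X : Ω → α) (x : α) :
    condp (condp p W w) X x = condp p (fun ω => (W ω, X ω)) (w, x) := by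
  funext ω
  have hswap : pr p (fun ω => (X ω, W ω)) (x, w) = pr p (fun ω => (W ω, X ω)) (w, x) :=
    pr_congr fun ω => by simp only [Prod.mk.injEq, and_comm]
  simp only [condp, pr_condp, hswap, Prod.mk.injEq]
  split_ifs <;> simp_all [div_div_div_cancel_right₀ hw]

lemma pr_pair_div_pr (X : Ω → α) (Y : Ω → β) (x : α) (y : β) :
    pr p (fun ω => (X ω, Y ω)) (x, y) / pr p X x = pr (condp p X x) Y y := by
  rw [pr_condp]
  congr 1
  exact pr_congr fun ω => by simp only [Prod.mk.injEq, and_comm]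

lemma sum_pr_mul_sum_condp [Fintype γ] (hp : ∀ ω, 0 ≤ p ω) (W : Ω → γ) (f : γ → Ω → ℝ) :
    ∑ w, pr p W w * ∑ ω, condp p W w ω * f w ω = ∑ ω, p ω * f (W ω) ω := by
  simp only [mul_sum]
  rw [sum_comm]
  refine sum_congr rfl fun ω _ => ?_
  rw [sum_eq_single (W ω) (fun w _ hw => by simp [condp, Ne.symm hw]) (by simp)]
  by_cases h0 : pr p W (W ω) = 0
  · have : p ω = 0 := le_antisymm (h0 ▸ le_pr_apply hp W ω) (hp ω)
    simp [this, h0]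
  · simp only [condp, if_true]
    field_simp

lemma sum_pr_mul_klDivF_condp [Fintype β] [Fintype γ] (hp : ∀ ω, 0 ≤ p ω) (W : Ω → γ)
    (Y : Ω → β) (q : γ → β → ℝ) :
    ∑ w, pr p W w * klDivF (pr (condp p W w) Y) (q w) =
      ∑ ω, p ω * log (pr (condp p W (W ω)) Y (Y ω) / q (W ω) (Y ω)) := by
  have hkl : ∀ w, klDivF (pr (condp p W w) Y) (q w) =
      ∑ ω, condp p W w ω * log (pr (condp p W w) Y (Y ω) / q w (Y ω)) :=
    fun w => sum_pr_mul Y _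
  simp only [hkl]
  exact sum_pr_mul_sum_condp hp W fun w ω => log (pr (condp p W w) Y (Y ω) / q w (Y ω))

lemma condp_apply_self_ne_zero (hp : ∀ ω, 0 ≤ p ω) (W : Ω → γ) {ω : Ω} (hω : p ω ≠ 0) :
    condp p W (W ω) ω ≠ 0 := by
  simp [condp, hω, (pr_apply_pos hp W hω).ne']

lemma log_pr_condp_pair_sub_log_pr_condp (hp : ∀ ω, 0 ≤ p ω) (X : Ω → α) (Y : Ω → β)
    (W : Ω → γ) {ω : Ω} (hω : p ω ≠ 0) :
    log (pr (condp p W (W ω)) (fun ω => (X ω, Y ω)) (X ω, Y ω))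
      - log (pr (condp p W (W ω)) X (X ω)) =
      log (pr (condp p (fun ω => (X ω, W ω)) (X ω, W ω)) Y (Y ω)) := by
  have hq := condp_nonneg hp W (W ω)
  have hqω := condp_apply_self_ne_zero hp W hω
  have hswap : condp p (fun ω' => (W ω', X ω')) (W ω, X ω) =
      condp p (fun ω' => (X ω', W ω')) (X ω, W ω) :=
    condp_congr fun ω' => by simp only [Prod.mk.injEq, and_comm]
  rw [← log_div (pr_apply_pos hq (fun ω => (X ω, Y ω)) hqω).ne' (pr_apply_pos hq X hqω).ne',
    pr_pair_div_pr, condp_condp (pr_apply_pos hp W hω).ne', hswap]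

lemma sum_pr_mul_klDivF_condp_nonneg [Fintype β] [Fintype γ] (hp : ∀ ω, 0 ≤ p ω)
    (W : Ω → γ) (Y : Ω → β) {q : γ → β → ℝ} (hq0 : ∀ w, 0 < pr p W w → ∀ y, 0 ≤ q w y)
    (hq1 : ∀ w, 0 < pr p W w → ∑ y, q w y = 1)
    (hq : ∀ w, 0 < pr p W w → ∀ y, 0 < pr p (fun ω => (Y ω, W ω)) (y, w) → 0 < q w y) :
    0 ≤ ∑ w, pr p W w * klDivF (pr (condp p W w) Y) (q w) := by
  refine sum_nonneg fun w _ => ?_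
  by_cases hw : pr p W w = 0
  · simp [hw]
  have hpos := (pr_nonneg hp W w).lt_of_ne' hw
  refine mul_nonneg hpos.le <| klDivF_nonneg (pr_nonneg (condp_nonneg hp W w) Y) (hq0 w hpos)
    (by rw [hq1 w hpos, sum_pr, sum_condp hw]) fun y hy => ?_
  rw [pr_condp, div_eq_zero_iff]
  by_contra hne
  exact (hq w hpos y ((pr_nonneg hp _ _).lt_of_ne' (not_or.mp hne).1)).ne' hy

end condp

section information

variable {Ω α β γ : Type*} [Fintype Ω] [Fintype α] [Fintype β] {p : Ω → ℝ}

lemma ent_eq_neg_sum_log (X : Ω → α) : ent p X = -∑ ω, p ω * log (pr p X (X ω)) := by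
  rw [ent, sum_pr_mul]

lemma mi_eq_sum_log (X : Ω → α) (Y : Ω → β) :
    mi p X Y = ∑ ω, p ω * (log (pr p (fun ω => (X ω, Y ω)) (X ω, Y ω))
      - log (pr p X (X ω)) - log (pr p Y (Y ω))) := by
  simp only [mi, ent_eq_neg_sum_log, mul_sub, sum_sub_distrib]
  ring

lemma mi_eq_klDivF (hp : ∀ ω, 0 ≤ p ω) (X : Ω → α) (Y : Ω → β) :
    mi p X Y = klDivF (pr p (fun ω => (X ω, Y ω))) (fun s => pr p X s.1 * pr p Y s.2) := by
  rw [mi_eq_sum_log, klDivF, sum_pr_mul]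
  refine sum_congr rfl fun ω _ => ?_
  by_cases hω : p ω = 0
  · simp [hω]
  have hX := pr_apply_pos hp X hω
  have hY := pr_apply_pos hp Y hω
  rw [log_div (pr_apply_pos hp (fun ω => (X ω, Y ω)) hω).ne' (mul_pos hX hY).ne',
    log_mul hX.ne' hY.ne', sub_sub]

lemma sum_pr_mul_pr (X : Ω → α) (Y : Ω → β) :
    ∑ s : α × β, pr p X s.1 * pr p Y s.2 = (∑ ω, p ω) * ∑ ω, p ω := by
  rw [Fintype.sum_prod_type, ← sum_mul_sum, sum_pr, sum_pr]

lemma mi_nonneg (hp : ∀ ω, 0 ≤ p ω) (hsum : ∑ ω, p ω = 1) (X : Ω → α) (Y : Ω → β) :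
    0 ≤ mi p X Y := by
  rw [mi_eq_klDivF hp]
  exact klDivF_nonneg (pr_nonneg hp _) (fun s => mul_nonneg (pr_nonneg hp X _) (pr_nonneg hp Y _))
    (by rw [sum_pr_mul_pr, sum_pr, hsum, one_mul]) fun s => pr_pair_eq_zero_of_mul_pr_eq_zero hp

lemma pr_condp_eq_of_mi_eq_zero (hp : ∀ ω, 0 ≤ p ω) (hsum : ∑ ω, p ω = 1) {X : Ω → α}
    {Y : Ω → β} (h : mi p X Y = 0) {x : α} (hx : pr p X x ≠ 0) :
    pr (condp p X x) Y = pr p Y := by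
  have hindep := eq_of_klDivF_nonpos (pr_nonneg hp _)
    (fun s => mul_nonneg (pr_nonneg hp X _) (pr_nonneg hp Y _))
    (by rw [sum_pr_mul_pr, sum_pr, hsum, one_mul]) (fun s => pr_pair_eq_zero_of_mul_pr_eq_zero hp)
    (mi_eq_klDivF hp X Y ▸ h.le)
  funext y
  rw [← pr_pair_div_pr, congrFun hindep (x, y), mul_div_cancel_left₀ _ hx]

lemma cmi_eq_sum_log [Fintype γ] (hp : ∀ ω, 0 ≤ p ω) (X : Ω → α) (Y : Ω → β) (W : Ω → γ) :
    cmi p X Y W = ∑ ω, p ω *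
      (log (pr (condp p W (W ω)) (fun ω => (X ω, Y ω)) (X ω, Y ω))
        - log (pr (condp p W (W ω)) X (X ω)) - log (pr (condp p W (W ω)) Y (Y ω))) := by
  simp only [cmi, mi_eq_sum_log]
  exact sum_pr_mul_sum_condp hp W fun w ω =>
    log (pr (condp p W w) (fun ω => (X ω, Y ω)) (X ω, Y ω))
      - log (pr (condp p W w) X (X ω)) - log (pr (condp p W w) Y (Y ω))

lemma mi_condp_eq_zero_of_cmi_eq_zero [Fintype γ] (hp : ∀ ω, 0 ≤ p ω) {X : Ω → α}
    {Y : Ω → β} {W : Ω → γ} (h : cmi p X Y W = 0) {w : γ} (hw : pr p W w ≠ 0) :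
    mi (condp p W w) X Y = 0 := by
  have hterm : ∀ w ∈ univ, 0 ≤ pr p W w * mi (condp p W w) X Y := fun w _ => by
    by_cases hw : pr p W w = 0
    · simp [hw]
    exact mul_nonneg (pr_nonneg hp W w) (mi_nonneg (condp_nonneg hp W w) (sum_condp hw) X Y)
  exact (mul_eq_zero.mp ((sum_eq_zero_iff_of_nonneg hterm).mp h w (mem_univ w))).resolve_left hw

lemma pr_condp_pair_eq_of_cmi_eq_zero (hp : ∀ ω, 0 ≤ p ω) {X : Ω → α} {Y : Ω → β}
    [Fintype γ] {Z : Ω → γ} (h : cmi p Y Z X = 0) {ω : Ω} (hω : p ω ≠ 0) :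
    pr (condp p (fun ω => (X ω, Y ω)) (X ω, Y ω)) Z = pr (condp p X (X ω)) Z := by
  have hX := (pr_apply_pos hp X hω).ne'
  rw [← condp_condp hX]
  exact pr_condp_eq_of_mi_eq_zero (condp_nonneg hp X _) (sum_condp hX)
    (mi_condp_eq_zero_of_cmi_eq_zero hp h hX)
    (pr_apply_pos (condp_nonneg hp X _) Y (condp_apply_self_ne_zero hp X hω)).ne'

lemma sum_pr_mul_klDivF_condp_of_cmi_eq_zero [Fintype γ] (hp : ∀ ω, 0 ≤ p ω) {X : Ω → α}
    {Y : Ω → β} {Z : Ω → γ} (h : cmi p Y Z X = 0) (q : α × β → γ → ℝ) :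
    ∑ xy : α × β, pr p (fun ω => (X ω, Y ω)) xy * klDivF (pr (condp p X xy.1) Z) (q xy) =
      ∑ ω, p ω * log (pr (condp p (fun ω => (X ω, Y ω)) (X ω, Y ω)) Z (Z ω) /
        q (X ω, Y ω) (Z ω)) := by
  rw [sum_pr_mul_congr (g' := fun xy => klDivF (pr (condp p (fun ω => (X ω, Y ω)) xy) Z) (q xy))
    fun ω hω => by rw [pr_condp_pair_eq_of_cmi_eq_zero hp h hω]]
  exact sum_pr_mul_klDivF_condp hp _ Z q

end information

theorem variational_bound_cmi_general
    {Ω 𝒳 𝒳' 𝒵 : Type*} [Fintype Ω] [Fintype 𝒳] [Fintype 𝒳'] [Fintype 𝒵]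
    (p : Ω → ℝ) (hp : ∀ ω, 0 ≤ p ω)
    (X : Ω → 𝒳) (X' : Ω → 𝒳') (Z : Ω → 𝒵)
    (h : cmi p X' Z X = 0)
    (r : 𝒳' → 𝒵 → ℝ)
    (hr0 : ∀ x', 0 < pr p X' x' → ∀ z, 0 ≤ r x' z)
    (hr1 : ∀ x', 0 < pr p X' x' → ∑ z, r x' z = 1)
    (hrsupp : ∀ x', 0 < pr p X' x' → ∀ z,
      0 < pr p (fun ω => (Z ω, X' ω)) (z, x') → 0 < r x' z) :
    cmi p X Z X' =
      (∑ xx' : 𝒳 × 𝒳', pr p (fun ω => (X ω, X' ω)) xx' *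
        klDivF (fun z => pr p (fun ω => (Z ω, X ω)) (z, xx'.1) / pr p X xx'.1)
          (r xx'.2)) -
      (∑ x', pr p X' x' *
        klDivF (fun z => pr p (fun ω => (Z ω, X' ω)) (z, x') / pr p X' x')
          (r x')) ∧
    cmi p X Z X' ≤
      ∑ xx' : 𝒳 × 𝒳', pr p (fun ω => (X ω, X' ω)) xx' *
        klDivF (fun z => pr p (fun ω => (Z ω, X ω)) (z, xx'.1) / pr p X xx'.1)
          (r xx'.2) := by
  simp only [← pr_condp]
  have heq : cmi p X Z X' = ∑ xx' : 𝒳 × 𝒳', pr p (fun ω => (X ω, X' ω)) xx' *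
      klDivF (pr (condp p X xx'.1) Z) (r xx'.2) -
      ∑ x', pr p X' x' * klDivF (pr (condp p X' x') Z) (r x') := by
    rw [sum_pr_mul_klDivF_condp_of_cmi_eq_zero hp h, sum_pr_mul_klDivF_condp hp X' Z r,
      cmi_eq_sum_log hp, ← sum_sub_distrib]
    refine sum_congr rfl fun ω _ => ?_
    by_cases hω : p ω = 0
    · simp [hω]
    have hX' := pr_apply_pos hp X' hω
    have hr := hrsupp _ hX' _ (pr_apply_pos hp (fun ω => (Z ω, X' ω)) hω)
    have hZ := pr_apply_pos (condp_nonneg hp X' _) Z (condp_apply_self_ne_zero hp X' hω)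
    have hXZ := pr_apply_pos (condp_nonneg hp _ _) Z
      (condp_apply_self_ne_zero hp (fun ω => (X ω, X' ω)) hω)
    rw [← mul_sub, log_pr_condp_pair_sub_log_pr_condp hp X Z X' hω,
      log_div hXZ.ne' hr.ne', log_div hZ.ne' hr.ne']
    ring
  exact ⟨heq, heq ▸ sub_le_self _ (sum_pr_mul_klDivF_condp_nonneg hp X' Z hr0 hr1 hrsupp)⟩

/-- variational upper bound on conditional mutual information.
Assume `I(X'; Z | X) = 0` and for each `x'` in the support of `X'` let
`r(·|x')` be a pmf on the range of `Z` with `r(z|x') > 0` whenever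
`P(Z=z, X'=x') > 0`.  Then
`I(X; Z | X') = E_{(x,x')}[D_KL(P(Z|X=x) ‖ r(·|x'))] - E_{x'}[D_KL(P(Z|X'=x') ‖ r(·|x'))]`,
and in particular `I(X; Z | X') ≤ E_{(x,x')}[D_KL(P(Z|X=x) ‖ r(·|x'))]`. -/
theorem variational_bound_cmi
    {Ω 𝒳 𝒳' 𝒵 : Type*} [Fintype Ω] [Fintype 𝒳] [Fintype 𝒳'] [Fintype 𝒵]
    [Nonempty 𝒳] [Nonempty 𝒳'] [Nonempty 𝒵]
    (p : Ω → ℝ) (hp : ∀ ω, 0 ≤ p ω) (hsum : ∑ ω, p ω = 1)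
    (X : Ω → 𝒳) (X' : Ω → 𝒳') (Z : Ω → 𝒵)
    (h : cmi p X' Z X = 0)
    (r : 𝒳' → 𝒵 → ℝ)
    (hr0 : ∀ x', 0 < pr p X' x' → ∀ z, 0 ≤ r x' z)
    (hr1 : ∀ x', 0 < pr p X' x' → ∑ z, r x' z = 1)
    (hrsupp : ∀ x', 0 < pr p X' x' → ∀ z,
      0 < pr p (fun ω => (Z ω, X' ω)) (z, x') → 0 < r x' z) :
    cmi p X Z X' =
      (∑ xx' : 𝒳 × 𝒳', pr p (fun ω => (X ω, X' ω)) xx' *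
        klDivF (fun z => pr p (fun ω => (Z ω, X ω)) (z, xx'.1) / pr p X xx'.1)
          (r xx'.2)) -
      (∑ x', pr p X' x' *
        klDivF (fun z => pr p (fun ω => (Z ω, X' ω)) (z, x') / pr p X' x')
          (r x')) ∧
    cmi p X Z X' ≤
      ∑ xx' : 𝒳 × 𝒳', pr p (fun ω => (X ω, X' ω)) xx' *
        klDivF (fun z => pr p (fun ω => (Z ω, X ω)) (z, xx'.1) / pr p X xx'.1)
          (r xx'.2) :=
  variational_bound_cmi_general p hp X X' Z h r hr0 hr1 hrsupp
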